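/- Let S ⊆ ℝ be a finite nonempty set and u ∈ ℝ. Consider the S-orbit of u, i.e., the set {π(u) : π an S-timed automorphism}. If u ∈ S + ℤ (that is, u = s + z for some s ∈ S and z ∈ ℤ), then this orbit equals the singleton {u}. Otherwise, the orbit equals the open interval (l, h), where l is the greatest element of S + ℤ strictly below u and h is the smallest element of S + ℤ strictly above u (both of which exist, and have the form s + z with s ∈ S and z ∈ ℤ). -/

import Mathlib

/-!
A timed automorphism commutes with integer translations, so an `S`-timed automorphism fixes
`S + ℤ` pointwise; being strictly monotone, it maps each gap `(l, h)` of the discrete set `S + ℤ`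
into itself, and fixes `u` when `u ∈ S + ℤ`. Conversely, for `v` in the gap `(l, h)` around `u`,
the piecewise affine map that fixes everything outside `(l, h)` and sends `u` to `v` is an order
automorphism of `[l, l + 1)` (as `l + 1 ∈ S + ℤ` forces `h ≤ l + 1`), and its extension to `ℝ`
commuting with integer translations is an `S`-timed automorphism sending `u` to `v`.
-/

/-- A timed automorphism: a strictly monotone bijection `ℝ → ℝ`
preserving integer differences, i.e. `f (t + 1) = f t + 1`. -/
def IsTimedAut (f : ℝ → ℝ) : Prop :=
  Function.Bijective f ∧ StrictMono f ∧ ∀ t : ℝ, f (t + 1) = f t + 1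

/-- The `S`-orbit of `u`: the set of images of `u` under `S`-timed
automorphisms. -/
def timedOrbit (S : Set ℝ) (u : ℝ) : Set ℝ :=
  {y | ∃ f : ℝ → ℝ, IsTimedAut f ∧ (∀ t ∈ S, f t = t) ∧ y = f u}

/-- `S + ℤ`: the set of reals of the form `s + z` with `s ∈ S`, `z ∈ ℤ`. -/
def intShifts (S : Set ℝ) : Set ℝ :=
  {x | ∃ s ∈ S, ∃ z : ℤ, x = s + z}

open Set Function

theorem IsTimedAut.map_add_int {f : ℝ → ℝ} (hf : IsTimedAut f) (t : ℝ) (n : ℤ) :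
    f (t + n) = f t + n :=
  AddConstMapClass.map_add_int (⟨f, hf.2.2⟩ : AddConstMap ℝ ℝ 1 1) t n

theorem isTimedAut_id : IsTimedAut id :=
  ⟨bijective_id, strictMono_id, fun _ => rfl⟩

theorem add_int_mem_intShifts {S : Set ℝ} {x : ℝ} (hx : x ∈ intShifts S) (n : ℤ) :
    x + n ∈ intShifts S := by
  obtain ⟨s, hs, z, rfl⟩ := hx
  exact ⟨s, hs, z + n, by push_cast; ring⟩

theorem subset_intShifts (S : Set ℝ) : S ⊆ intShifts S :=
  fun s hs => ⟨s, hs, 0, by simp⟩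

theorem IsTimedAut.apply_eq_self_of_mem_intShifts {S : Set ℝ} {f : ℝ → ℝ} (hf : IsTimedAut f)
    (hfix : ∀ t ∈ S, f t = t) {x : ℝ} (hx : x ∈ intShifts S) : f x = x := by
  obtain ⟨s, hs, z, rfl⟩ := hx
  rw [hf.map_add_int, hfix s hs]

theorem timedOrbit_eq_singleton {S : Set ℝ} {u : ℝ} (hu : u ∈ intShifts S) :
    timedOrbit S u = {u} := by
  refine eq_singleton_iff_unique_mem.2 ⟨⟨id, isTimedAut_id, fun _ _ => rfl, rfl⟩, ?_⟩
  rintro _ ⟨f, hf, hfix, rfl⟩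
  exact hf.apply_eq_self_of_mem_intShifts hfix hu

theorem timedOrbit_subset_Ioo {S : Set ℝ} {l u h : ℝ} (hl : l ∈ intShifts S)
    (hh : h ∈ intShifts S) (hlu : l < u) (huh : u < h) : timedOrbit S u ⊆ Ioo l h := by
  rintro _ ⟨f, hf, hfix, rfl⟩
  rw [← hf.apply_eq_self_of_mem_intShifts hfix hl, ← hf.apply_eq_self_of_mem_intShifts hfix hh]
  exact ⟨hf.2.1 hlu, hf.2.1 huh⟩

theorem exists_isGreatest_intShifts_Iic {S : Set ℝ} (hS : S.Finite) (hne : S.Nonempty) (u : ℝ) :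
    ∃ l, IsGreatest (intShifts S ∩ Iic u) l := by
  obtain ⟨s₀, hs₀, hmax⟩ := S.exists_max_image (fun s => s + ⌊u - s⌋) hS hne
  refine ⟨s₀ + ⌊u - s₀⌋, ⟨⟨s₀, hs₀, _, rfl⟩, ?_⟩, ?_⟩
  · exact mem_Iic.2 (by linarith [Int.floor_le (u - s₀)])
  · rintro _ ⟨⟨s, hs, z, rfl⟩, hx⟩
    have hz : (z : ℝ) ≤ ⌊u - s⌋ := by
      exact_mod_cast Int.le_floor.2 (by linarith [mem_Iic.1 hx])
    linarith [hmax s hs]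

theorem exists_isLeast_intShifts_Ici {S : Set ℝ} (hS : S.Finite) (hne : S.Nonempty) (u : ℝ) :
    ∃ h, IsLeast (intShifts S ∩ Ici u) h := by
  obtain ⟨s₀, hs₀, hmin⟩ := S.exists_min_image (fun s => s + ⌈u - s⌉) hS hne
  refine ⟨s₀ + ⌈u - s₀⌉, ⟨⟨s₀, hs₀, _, rfl⟩, ?_⟩, ?_⟩
  · exact mem_Ici.2 (by linarith [Int.le_ceil (u - s₀)])
  · rintro _ ⟨⟨s, hs, z, rfl⟩, hx⟩
    have hz : (⌈u - s⌉ : ℝ) ≤ z := by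
      exact_mod_cast Int.ceil_le.2 (by linarith [mem_Ici.1 hx])
    linarith [hmin s hs]

section PeriodicExtension

noncomputable def periodicExtension (a : ℝ) (φ : ℝ → ℝ) (t : ℝ) : ℝ :=
  φ (t - ⌊t - a⌋) + ⌊t - a⌋

variable {a : ℝ} {φ : ℝ → ℝ}

theorem exists_mem_Ico_add_int (a t : ℝ) : ∃ r ∈ Ico a (a + 1), ∃ n : ℤ, t = r + n :=
  ⟨t - ⌊t - a⌋, ⟨by linarith [Int.floor_le (t - a)], by linarith [Int.lt_floor_add_one (t - a)]⟩,
    ⌊t - a⌋, by ring⟩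

theorem periodicExtension_add_int {r : ℝ} (hr : r ∈ Ico a (a + 1)) (n : ℤ) :
    periodicExtension a φ (r + n) = φ r + n := by
  have hfloor : ⌊r + n - a⌋ = n := by
    rw [Int.floor_eq_iff]
    constructor <;> linarith [hr.1, hr.2]
  simp [periodicExtension, hfloor]

theorem periodicExtension_add_one (t : ℝ) :
    periodicExtension a φ (t + 1) = periodicExtension a φ t + 1 := by
  obtain ⟨r, hr, n, rfl⟩ := exists_mem_Ico_add_int a t
  have h := periodicExtension_add_int (φ := φ) hr (n + 1)
  push_cast at h
  rw [add_assoc, h, periodicExtension_add_int hr]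
  ring

theorem strictMono_periodicExtension (hmaps : MapsTo φ (Ico a (a + 1)) (Ico a (a + 1)))
    (hmono : StrictMonoOn φ (Ico a (a + 1))) : StrictMono (periodicExtension a φ) := by
  intro t₁ t₂ ht
  obtain ⟨r₁, hr₁, n₁, rfl⟩ := exists_mem_Ico_add_int a t₁
  obtain ⟨r₂, hr₂, n₂, rfl⟩ := exists_mem_Ico_add_int a t₂
  rw [periodicExtension_add_int hr₁, periodicExtension_add_int hr₂]
  obtain hn | rfl | hn := lt_trichotomy n₁ n₂
  · have : (n₁ : ℝ) + 1 ≤ n₂ := by exact_mod_cast hn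
    linarith [(hmaps hr₁).2, (hmaps hr₂).1]
  · linarith [hmono hr₁ hr₂ (by linarith)]
  · have : (n₂ : ℝ) + 1 ≤ n₁ := by exact_mod_cast hn
    linarith [hr₁.1, hr₂.2]

theorem isTimedAut_periodicExtension (hφ : BijOn φ (Ico a (a + 1)) (Ico a (a + 1)))
    (hmono : StrictMonoOn φ (Ico a (a + 1))) : IsTimedAut (periodicExtension a φ) := by
  have hstrict := strictMono_periodicExtension hφ.mapsTo hmono
  refine ⟨⟨hstrict.injective, fun y => ?_⟩, hstrict, periodicExtension_add_one⟩
  obtain ⟨r, hr, n, rfl⟩ := exists_mem_Ico_add_int a y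
  obtain ⟨x, hx, rfl⟩ := hφ.surjOn hr
  exact ⟨x + n, periodicExtension_add_int hx n⟩

end PeriodicExtension

theorem StrictMono.piecewise_Iic {α β : Type*} [LinearOrder α] [Preorder β]
    {f g : α → β} {a : α} [DecidablePred (· ∈ Iic a)] (hf : StrictMono f) (hg : StrictMono g)
    (hfg : f a = g a) : StrictMono ((Iic a).piecewise f g) := by
  refine StrictMonoOn.Iic_union_Ici (a := a) ((hf.strictMonoOn _).congr fun x hx => ?_)
    ((hg.strictMonoOn _).congr fun x hx => ?_)
  · exact (piecewise_eq_of_mem _ _ _ hx).symm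
  · obtain rfl | hx := (mem_Ici.1 hx).eq_or_lt
    · rw [piecewise_eq_of_mem _ _ _ self_mem_Iic, hfg]
    · exact (piecewise_eq_of_notMem _ _ _ (notMem_Iic.2 hx)).symm

theorem Function.Surjective.piecewise_Iic {α β : Type*} [LinearOrder α] [LinearOrder β]
    {f g : α → β} {a : α} [DecidablePred (· ∈ Iic a)] (hfs : Surjective f) (hgs : Surjective g)
    (hf : StrictMono f) (hg : StrictMono g) (hfg : f a = g a) :
    Surjective ((Iic a).piecewise f g) := by
  intro y
  obtain hy | hy := le_or_gt y (f a)
  · obtain ⟨x, rfl⟩ := hfs y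
    exact ⟨x, piecewise_eq_of_mem _ _ _ (hf.le_iff_le.1 hy)⟩
  · obtain ⟨x, rfl⟩ := hgs y
    exact ⟨x, piecewise_eq_of_notMem _ _ _ (notMem_Iic.2 (hg.lt_iff_lt.1 (hfg ▸ hy)))⟩

theorem StrictMono.bijOn_Ico {α : Type*} [LinearOrder α] {φ : α → α} {a b : α}
    (hmono : StrictMono φ) (hsurj : Surjective φ) (ha : φ a = a) (hb : φ b = b) :
    BijOn φ (Ico a b) (Ico a b) := by
  have himage := (hmono.orderIsoOfSurjective φ hsurj).image_Ico a b
  simp only [StrictMono.coe_orderIsoOfSurjective, ha, hb] at himage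
  have hbij := hmono.injective.injOn.bijOn_image (s := Ico a b)
  rwa [himage] at hbij

theorem AffineMap.strictMono_homothety {c k : ℝ} (hk : 0 < k) :
    StrictMono (AffineMap.homothety c k : ℝ → ℝ) := fun x y hxy => by
  simp only [AffineMap.homothety_apply, vsub_eq_sub, smul_eq_mul, vadd_eq_add]
  nlinarith

theorem AffineMap.surjective_homothety {c k : ℝ} (hk : k ≠ 0) :
    Surjective (AffineMap.homothety c k : ℝ → ℝ) := fun y =>
  ⟨c + (y - c) / k, by
    simp only [AffineMap.homothety_apply, vsub_eq_sub, smul_eq_mul, vadd_eq_add]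
    field_simp
    ring⟩

theorem AffineMap.homothety_div_sub_apply {k : Type*} [Field k] {a b : k} (c : k) (hab : a ≠ b) :
    AffineMap.homothety a ((c - a) / (b - a)) b = c := by
  simp only [AffineMap.homothety_apply, vsub_eq_sub, smul_eq_mul, vadd_eq_add]
  field_simp [sub_ne_zero.2 hab.symm]
  ring

section Pinch

noncomputable def pinch (l u h v : ℝ) : ℝ → ℝ :=
  (Iic u).piecewise
    ((Iic l).piecewise id (AffineMap.homothety l ((v - l) / (u - l))))
    ((Iic h).piecewise (AffineMap.homothety h ((v - h) / (u - h))) id)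

variable {l u h v : ℝ}

theorem pinch_apply_of_le {x : ℝ} (hlu : l < u) (hx : x ≤ l) : pinch l u h v x = x := by
  rw [pinch, piecewise_eq_of_mem _ _ _ (mem_Iic.2 (hx.trans hlu.le)),
    piecewise_eq_of_mem _ _ _ (mem_Iic.2 hx), id]

theorem pinch_apply_of_ge {x : ℝ} (huh : u < h) (hx : h ≤ x) : pinch l u h v x = x := by
  rw [pinch, piecewise_eq_of_notMem _ _ _ (notMem_Iic.2 (huh.trans_le hx))]
  obtain rfl | hx := hx.eq_or_lt
  · rw [piecewise_eq_of_mem _ _ _ self_mem_Iic, AffineMap.homothety_apply_same]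
  · rw [piecewise_eq_of_notMem _ _ _ (notMem_Iic.2 hx), id]

theorem pinch_apply_center (hlu : l < u) : pinch l u h v u = v := by
  rw [pinch, piecewise_eq_of_mem _ _ _ self_mem_Iic,
    piecewise_eq_of_notMem _ _ _ (notMem_Iic.2 hlu), AffineMap.homothety_div_sub_apply v hlu.ne]

variable (hlu : l < u) (huh : u < h) (hlv : l < v) (hvh : v < h)
include hlu huh hlv hvh

theorem strictMono_pinch_and_surjective :
    StrictMono (pinch l u h v) ∧ Surjective (pinch l u h v) := by
  have hc : 0 < (v - l) / (u - l) := div_pos (sub_pos.2 hlv) (sub_pos.2 hlu)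
  have hd : 0 < (v - h) / (u - h) := div_pos_of_neg_of_neg (sub_neg.2 hvh) (sub_neg.2 huh)
  have hleft := strictMono_id.piecewise_Iic (AffineMap.strictMono_homothety hc)
    (AffineMap.homothety_apply_same l _).symm
  have hright := (AffineMap.strictMono_homothety hd).piecewise_Iic strictMono_id
    (AffineMap.homothety_apply_same h _)
  have hagree : (Iic l).piecewise id (AffineMap.homothety l ((v - l) / (u - l))) u =
      (Iic h).piecewise (AffineMap.homothety h ((v - h) / (u - h))) id u := by
    rw [piecewise_eq_of_notMem _ _ _ (notMem_Iic.2 hlu),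
      piecewise_eq_of_mem _ _ _ (mem_Iic.2 huh.le), AffineMap.homothety_div_sub_apply v hlu.ne,
      AffineMap.homothety_div_sub_apply v huh.ne']
  refine ⟨hleft.piecewise_Iic hright hagree, Surjective.piecewise_Iic ?_ ?_ hleft hright hagree⟩
  · exact surjective_id.piecewise_Iic (AffineMap.surjective_homothety hc.ne') strictMono_id
      (AffineMap.strictMono_homothety hc) (AffineMap.homothety_apply_same l _).symm
  · exact (AffineMap.surjective_homothety hd.ne').piecewise_Iic surjective_id
      (AffineMap.strictMono_homothety hd) strictMono_id (AffineMap.homothety_apply_same h _)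

end Pinch

theorem Ioo_subset_timedOrbit {S : Set ℝ} {l u h : ℝ} (hlu : l < u) (huh : u < h)
    (hhl : h ≤ l + 1) (hgap : ∀ x ∈ intShifts S, x ∉ Ioo l h) : Ioo l h ⊆ timedOrbit S u := by
  rintro v ⟨hlv, hvh⟩
  obtain ⟨hmono, hsurj⟩ := strictMono_pinch_and_surjective hlu huh hlv hvh
  have hbij : BijOn (pinch l u h v) (Ico l (l + 1)) (Ico l (l + 1)) :=
    hmono.bijOn_Ico hsurj (pinch_apply_of_le hlu le_rfl) (pinch_apply_of_ge huh hhl)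
  refine ⟨periodicExtension l (pinch l u h v),
    isTimedAut_periodicExtension hbij (hmono.strictMonoOn _), fun s hs => ?_, ?_⟩
  · obtain ⟨r, hr, n, rfl⟩ := exists_mem_Ico_add_int l s
    have hrS : r ∈ intShifts S := by
      simpa using add_int_mem_intShifts (subset_intShifts S hs) (-n)
    rw [periodicExtension_add_int hr]
    rcases le_or_gt r l with hrl | hlr
    · rw [pinch_apply_of_le hlu hrl]
    · rw [pinch_apply_of_ge huh (not_lt.1 fun hrh => hgap r hrS ⟨hlr, hrh⟩)]
  · simpa [pinch_apply_center hlu] using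
      (periodicExtension_add_int (φ := pinch l u h v) ⟨hlu.le, by linarith⟩ 0).symm

/-- for a finite nonempty `S ⊆ ℝ` and `u ∈ ℝ`, the `S`-orbit of
`u` is the singleton `{u}` if `u ∈ S + ℤ`; otherwise it is the open interval
`(l, h)` where `l` is the greatest element of `S + ℤ` strictly below `u` and
`h` the smallest element of `S + ℤ` strictly above `u` (both exist). -/
theorem timedOrbit_singleton_or_openInterval
    (S : Set ℝ) (hS : S.Finite) (hne : S.Nonempty) (u : ℝ) :
    (u ∈ intShifts S → timedOrbit S u = {u}) ∧
    (u ∉ intShifts S →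
      ∃ l ∈ intShifts S, ∃ h ∈ intShifts S,
        l < u ∧ u < h ∧
        (∀ x ∈ intShifts S, x < u → x ≤ l) ∧
        (∀ x ∈ intShifts S, u < x → h ≤ x) ∧
        timedOrbit S u = Set.Ioo l h) := by
  refine ⟨timedOrbit_eq_singleton, fun hu => ?_⟩
  obtain ⟨l, ⟨hl, hlu⟩, hlmax⟩ := exists_isGreatest_intShifts_Iic hS hne u
  obtain ⟨h, ⟨hh, huh⟩, hhmin⟩ := exists_isLeast_intShifts_Ici hS hne u
  replace hlu : l < u := (mem_Iic.1 hlu).lt_of_ne (by rintro rfl; exact hu hl)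
  replace huh : u < h := (mem_Ici.1 huh).lt_of_ne' (by rintro rfl; exact hu hh)
  have hbelow : ∀ x ∈ intShifts S, x < u → x ≤ l := fun x hx hxu => hlmax ⟨hx, hxu.le⟩
  have habove : ∀ x ∈ intShifts S, u < x → h ≤ x := fun x hx hux => hhmin ⟨hx, hux.le⟩
  have hhl : h ≤ l + 1 := by
    have hl₁ : l + 1 ∈ intShifts S := by exact_mod_cast add_int_mem_intShifts hl 1
    exact habove _ hl₁ (lt_of_not_ge fun hle => by linarith [hlmax ⟨hl₁, hle⟩])
  have hgap : ∀ x ∈ intShifts S, x ∉ Ioo l h := fun x hx ⟨hlx, hxh⟩ => by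
    rcases lt_trichotomy x u with hxu | rfl | hux
    · linarith [hbelow x hx hxu]
    · exact hu hx
    · linarith [habove x hx hux]
  exact ⟨l, hl, h, hh, hlu, huh, hbelow, habove,
    (timedOrbit_subset_Ioo hl hh hlu huh).antisymm (Ioo_subset_timedOrbit hlu huh hhl hgap)⟩
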